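/- Let (G, S) be an even Coxeter system. A word x over S is geodesic if and only if x contains no contiguous subword of the form (s, w, s), where s ∈ S, the word (w, s) is geodesic, and π(w) lies in the centralizer C(s) of s in G. -/

import Mathlib

/-- The relators of the even Coxeter system with Coxeter matrix `M`:
`(st)^{M s t} = 1` whenever `M s t ≠ 0` (and `M s s = 1` makes every
generator an involution). -/
def ecoxRels {S : Type*} (M : S → S → ℕ) : Set (FreeGroup S) :=
  {r | ∃ s t : S, M s t ≠ 0 ∧ r = (FreeGroup.of s * FreeGroup.of t) ^ (M s t)}

/-- `M` is an even Coxeter matrix: `M s s = 1`, `M` is symmetric, and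
`M s t` is even (possibly `0`) for `s ≠ t`. -/
def IsEvenCoxeterMatrix {S : Type*} (M : S → S → ℕ) : Prop :=
  (∀ s, M s s = 1) ∧ (∀ s t, M s t = M t s) ∧ (∀ s t : S, s ≠ t → Even (M s t))

/-- The image of a generator in the even Coxeter group. -/
def ecoxGen {S : Type*} (M : S → S → ℕ) (s : S) : PresentedGroup (ecoxRels M) :=
  PresentedGroup.of s

/-- The natural projection `π : S* → G` from words to the even Coxeter group. -/
def ecoxPi {S : Type*} (M : S → S → ℕ) (w : List S) : PresentedGroup (ecoxRels M) :=
  (w.map fun s => ecoxGen M s).prod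

/-- A word over `S` is geodesic if its length equals the word length of the
element it represents, i.e. no shorter word represents the same element. -/
def ecoxIsGeodesic {S : Type*} (M : S → S → ℕ) (w : List S) : Prop :=
  ∀ w' : List S, ecoxPi M w' = ecoxPi M w → w.length ≤ w'.length


namespace EcoxAux

open List CoxeterSystem

variable {B : Type*} {W : Type*} [Group W] [DecidableEq W] {M : CoxeterMatrix B}
variable (cs : CoxeterSystem M W)

local prefix:100 "s" => cs.simple
local prefix:100 "π" => cs.wordProd
local prefix:100 "ℓ" => cs.length
local prefix:100 "ris" => cs.rightInvSeq

omit [DecidableEq W] in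
theorem conj_eq_iff (a c t : W) : a * t * a⁻¹ = c ↔ t = a⁻¹ * c * a := by
  constructor
  · intro h; rw [← h]; group
  · intro h; rw [h]; group

omit [DecidableEq W] in
theorem simple_conj_eq_iff (j : B) (X c : W) : s j * X * s j = c ↔ X = s j * c * s j := by
  constructor
  · intro h
    have h5 : s j * (s j * X * s j) * s j = (s j * s j) * X * (s j * s j) := by group
    rw [← h, h5, cs.simple_mul_simple_self, one_mul, mul_one]
  · intro h
    have h5 : s j * (s j * c * s j) * s j = (s j * s j) * c * (s j * s j) := by group
    rw [h, h5, cs.simple_mul_simple_self, one_mul, mul_one]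

omit [DecidableEq W] in
theorem simple_conj_simple_iff (i : B) (t : W) : s i * t * s i = s i ↔ t = s i := by
  rw [simple_conj_eq_iff cs]
  have : s i * s i * s i = s i := by rw [cs.simple_mul_simple_self, one_mul]
  rw [this]

/-- Tits' permutation: the generator `i` acts on `W × ZMod 2`. -/
def titsPerm (i : B) : Equiv.Perm (W × ZMod 2) where
  toFun x := (s i * x.1 * s i, x.2 + if x.1 = s i then 1 else 0)
  invFun x := (s i * x.1 * s i, x.2 + if x.1 = s i then 1 else 0)
  left_inv x := by
    obtain ⟨t, z⟩ := x
    show (s i * (s i * t * s i) * s i,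
      (z + if t = s i then 1 else 0) + if (s i * t * s i) = s i then 1 else 0) = (t, z)
    have h1 : s i * (s i * t * s i) * s i = t := by
      have h5 : s i * (s i * t * s i) * s i = (s i * s i) * t * (s i * s i) := by group
      rw [h5, cs.simple_mul_simple_self, one_mul, mul_one]
    rw [Prod.mk.injEq]
    refine ⟨h1, ?_⟩
    rcases eq_or_ne t (s i) with rfl | h
    · rw [if_pos rfl, if_pos ((simple_conj_simple_iff cs i _).mpr rfl)]
      rw [add_assoc, show (1 + 1 : ZMod 2) = 0 by decide, add_zero]
    · rw [if_neg h, if_neg (fun hc => h ((simple_conj_simple_iff cs i t).mp hc)),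
        add_zero, add_zero]
  right_inv x := by
    obtain ⟨t, z⟩ := x
    show (s i * (s i * t * s i) * s i,
      (z + if t = s i then 1 else 0) + if (s i * t * s i) = s i then 1 else 0) = (t, z)
    have h1 : s i * (s i * t * s i) * s i = t := by
      have h5 : s i * (s i * t * s i) * s i = (s i * s i) * t * (s i * s i) := by group
      rw [h5, cs.simple_mul_simple_self, one_mul, mul_one]
    rw [Prod.mk.injEq]
    refine ⟨h1, ?_⟩
    rcases eq_or_ne t (s i) with rfl | h
    · rw [if_pos rfl, if_pos ((simple_conj_simple_iff cs i _).mpr rfl)]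
      rw [add_assoc, show (1 + 1 : ZMod 2) = 0 by decide, add_zero]
    · rw [if_neg h, if_neg (fun hc => h ((simple_conj_simple_iff cs i t).mp hc)),
        add_zero, add_zero]

theorem titsPerm_apply (i : B) (t : W) (z : ZMod 2) :
    titsPerm cs i (t, z) = (s i * t * s i, z + if t = s i then 1 else 0) := rfl

omit [DecidableEq W] in
theorem simple_mul_pow (i j : B) (n : ℕ) :
    s j * (s i * s j) ^ n = ((s i * s j) ^ n)⁻¹ * s j := by
  induction n with
  | zero => simp
  | succ n ih =>
    have hsjp : s j * (s i * s j) = (s i * s j)⁻¹ * s j := by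
      rw [mul_inv_rev, cs.inv_simple, cs.inv_simple, mul_assoc]
    rw [pow_succ', ← mul_assoc, hsjp, mul_assoc, ih, ← mul_assoc, ← mul_inv_rev]; rw [← pow_succ, pow_succ']

theorem titsPerm_mul_pow (i j : B) (k : ℕ) (t : W) (z : ZMod 2) :
    ((titsPerm cs i * titsPerm cs j) ^ k) (t, z) =
      ((s i * s j) ^ k * t * ((s i * s j) ^ k)⁻¹,
        z + ∑ n ∈ Finset.range (2 * k),
          if t = ((s i * s j) ^ n)⁻¹ * s j then 1 else 0) := by
  induction k generalizing z with
  | zero => simp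
  | succ k ih =>
    rw [pow_succ', Equiv.Perm.mul_apply, ih, Equiv.Perm.mul_apply, titsPerm_apply,
      titsPerm_apply]
    set p := s i * s j with hp
    have e1 : (p ^ k * t * (p ^ k)⁻¹ = s j) ↔ (t = (p ^ (2 * k))⁻¹ * s j) := by
      rw [conj_eq_iff]
      have : (p ^ k)⁻¹ * s j * p ^ k = (p ^ (2 * k))⁻¹ * s j := by
        calc (p ^ k)⁻¹ * s j * p ^ k = (p ^ k)⁻¹ * (s j * p ^ k) := by rw [mul_assoc]
          _ = (p ^ k)⁻¹ * (((p ^ k))⁻¹ * s j) := by rw [simple_mul_pow cs]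
          _ = (p ^ k * p ^ k)⁻¹ * s j := by group
          _ = (p ^ (2 * k))⁻¹ * s j := by rw [← pow_add, two_mul]
      rw [this]
    have e2 : (s j * (p ^ k * t * (p ^ k)⁻¹) * s j = s i) ↔
        (t = (p ^ (2 * k + 1))⁻¹ * s j) := by
      rw [simple_conj_eq_iff cs, conj_eq_iff]
      have : (p ^ k)⁻¹ * (s j * s i * s j) * p ^ k = (p ^ (2 * k + 1))⁻¹ * s j := by
        have hsisj : s j * s i * s j = p⁻¹ * s j := by
          rw [hp, mul_inv_rev, cs.inv_simple, cs.inv_simple, mul_assoc]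
        calc (p ^ k)⁻¹ * (s j * s i * s j) * p ^ k
            = (p ^ k)⁻¹ * p⁻¹ * (s j * p ^ k) := by rw [hsisj]; group
          _ = (p ^ k)⁻¹ * p⁻¹ * ((p ^ k)⁻¹ * s j) := by rw [simple_mul_pow cs]
          _ = ((p ^ k * p) * p ^ k)⁻¹ * s j := by group
          _ = (p ^ (2 * k + 1))⁻¹ * s j := by
              rw [← pow_succ, ← pow_add, show k + 1 + k = 2 * k + 1 by omega]
      rw [this]
    rw [Prod.mk.injEq]
    constructor
    · have : p ^ (k + 1) * t * (p ^ (k + 1))⁻¹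
          = s i * (s j * (p ^ k * t * (p ^ k)⁻¹) * s j) * s i := by
        rw [pow_succ', mul_inv_rev (p) (p ^ k), hp, mul_inv_rev, cs.inv_simple, cs.inv_simple]
        group
      rw [this]
    · rw [show 2 * (k + 1) = 2 * k + 1 + 1 by omega, Finset.sum_range_succ,
        Finset.sum_range_succ, if_congr e1 rfl rfl, if_congr e2 rfl rfl]
      ring


theorem titsPerm_liftable : M.IsLiftable (fun i => titsPerm cs i) := by
  intro i j
  have hp : (s i * s j) ^ M.M i j = 1 := cs.simple_mul_simple_pow i j
  apply Equiv.ext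
  rintro ⟨t, z⟩
  rw [Equiv.Perm.one_apply]
  rw [titsPerm_mul_pow, hp]
  rw [Prod.mk.injEq]
  constructor
  · simp
  · set m := M.M i j with hm
    have hperiod : ∀ n : ℕ, ((s i * s j) ^ (m + n))⁻¹ * s j = ((s i * s j) ^ n)⁻¹ * s j := by
      intro n
      rw [pow_add, hp, one_mul]
    have hsplit : ∑ n ∈ Finset.range (2 * m),
        (if t = ((s i * s j) ^ n)⁻¹ * s j then (1 : ZMod 2) else 0)
        = (∑ n ∈ Finset.range m,
            if t = ((s i * s j) ^ n)⁻¹ * s j then (1 : ZMod 2) else 0)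
          + ∑ n ∈ Finset.range m,
            if t = ((s i * s j) ^ (m + n))⁻¹ * s j then (1 : ZMod 2) else 0 := by
      rw [Finset.range_eq_Ico, ← Finset.sum_Ico_consecutive _ (Nat.zero_le m)
        (by omega : m ≤ 2 * m)]
      congr 1
      · rw [Finset.range_eq_Ico]
      rw [Finset.sum_Ico_eq_sum_range, show 2 * m - m = m by omega,
        Finset.range_eq_Ico]
    rw [hsplit]
    have : ∀ n ∈ Finset.range m,
        (if t = ((s i * s j) ^ (m + n))⁻¹ * s j then (1 : ZMod 2) else 0)
        = if t = ((s i * s j) ^ n)⁻¹ * s j then (1 : ZMod 2) else 0 := by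
      intro n _; rw [hperiod]
    rw [Finset.sum_congr rfl this]
    generalize (∑ n ∈ Finset.range m,
      if t = ((s i * s j) ^ n)⁻¹ * s j then (1 : ZMod 2) else 0) = A
    have : A + A = 0 := by
      have : ∀ a : ZMod 2, a + a = 0 := by decide
      exact this A
    rw [this, add_zero]

/-- Tits' permutation representation. -/
def titsRep : W →* Equiv.Perm (W × ZMod 2) :=
  cs.lift ⟨fun i => titsPerm cs i, titsPerm_liftable cs⟩

theorem titsRep_simple (i : B) : titsRep cs (s i) = titsPerm cs i :=
  cs.lift_apply_simple _ i

theorem rightInvSeq_cons (i : B) (ω : List B) :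
    ris (i :: ω) = ((π ω)⁻¹ * s i * π ω) :: ris ω := rfl

theorem titsRep_wordProd (ω : List B) (t : W) (z : ZMod 2) :
    titsRep cs (π ω) (t, z)
      = (π ω * t * (π ω)⁻¹, z + (((ris ω).count t : ℕ) : ZMod 2)) := by
  induction ω generalizing z with
  | nil => simp [CoxeterSystem.wordProd_nil, CoxeterSystem.rightInvSeq]
  | cons i ω ih =>
    rw [cs.wordProd_cons, map_mul, Equiv.Perm.mul_apply, ih, titsRep_simple, titsPerm_apply]
    rw [Prod.mk.injEq]
    constructor
    · rw [mul_inv_rev, cs.inv_simple]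
      group
    · rw [rightInvSeq_cons, List.count_cons]
      have hiff : (π ω * t * (π ω)⁻¹ = s i) ↔ ((π ω)⁻¹ * s i * π ω = t) := by
        rw [conj_eq_iff, eq_comm]
      push_cast
      simp only [beq_iff_eq]
      rw [if_congr hiff rfl rfl]
      rcases eq_or_ne ((π ω)⁻¹ * s i * π ω) t with h | h
      · rw [if_pos h]
        ring
      · rw [if_neg h]
        ring

theorem count_ris_parity {ω ω' : List B} (h : π ω = π ω') (t : W) :
    (((ris ω).count t : ℕ) : ZMod 2) = (((ris ω').count t : ℕ) : ZMod 2) := by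
  have h1 := titsRep_wordProd cs ω t 0
  have h2 := titsRep_wordProd cs ω' t 0
  rw [h] at h1
  rw [h1] at h2
  have := congrArg Prod.snd h2
  simpa using this

/-- The exchange property. -/
theorem exchange {ω : List B} (hred : cs.IsReduced ω) (i : B)
    (hnred : ¬ cs.IsReduced (ω ++ [i])) :
    ∃ j, j < ω.length ∧ π ω * s i = π (ω.eraseIdx j) := by
  have hπ : π (ω ++ [i]) = π ω * s i := by
    rw [cs.wordProd_append, cs.wordProd_singleton]
  have hlen : ℓ (π ω * s i) + 1 = ω.length := by
    rcases cs.length_mul_simple (π ω) i with h | h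
    · exfalso
      apply hnred
      unfold CoxeterSystem.IsReduced
      rw [hπ, h, hred]
      simp
    · rw [h, hred]
  obtain ⟨ω', hω'len, hω'⟩ := cs.exists_reduced_word (π ω * s i)
  have hπ'' : π (ω' ++ [i]) = π ω := by
    rw [cs.wordProd_append, cs.wordProd_singleton, ← hω',
      cs.simple_mul_simple_cancel_right]
  have hred'' : cs.IsReduced (ω' ++ [i]) := by
    unfold CoxeterSystem.IsReduced
    rw [hπ'', hred, List.length_append, List.length_singleton, ← hω'len, ← hω', hlen]
  have hmem'' : s i ∈ ris (ω' ++ [i]) := by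
    rw [← List.concat_eq_append, cs.rightInvSeq_concat]
    simp
  have hcount'' : (ris (ω' ++ [i])).count (s i) = 1 :=
    List.count_eq_one_of_mem (hred''.nodup_rightInvSeq) hmem''
  have hpar : (((ris ω).count (s i) : ℕ) : ZMod 2) = 1 := by
    rw [count_ris_parity cs hπ''.symm (s i), hcount'']
    rfl
  have hmem : s i ∈ ris ω := by
    by_contra hmem
    rw [List.count_eq_zero_of_not_mem hmem] at hpar
    simp at hpar
  obtain ⟨j, hj, hget⟩ := List.mem_iff_getElem.mp hmem
  have hj' : j < ω.length := by rwa [cs.length_rightInvSeq] at hj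
  have := cs.wordProd_mul_getD_rightInvSeq ω j
  rw [List.getD_eq_getElem _ _ hj, hget] at this
  exact ⟨j, hj', this⟩

end EcoxAux

namespace EcoxAux2

variable {S : Type*} (M : S → S → ℕ) (hM : IsEvenCoxeterMatrix M)

theorem ecoxPi_append (u v : List S) : ecoxPi M (u ++ v) = ecoxPi M u * ecoxPi M v := by
  unfold ecoxPi
  rw [List.map_append, List.prod_append]

theorem ecoxPi_cons (s : S) (w : List S) :
    ecoxPi M (s :: w) = ecoxGen M s * ecoxPi M w := by
  unfold ecoxPi
  rw [List.map_cons, List.prod_cons]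

theorem ecoxPi_singleton (s : S) : ecoxPi M [s] = ecoxGen M s := by
  unfold ecoxPi; simp

/-- The associated Coxeter matrix. -/
def ecoxCM : CoxeterMatrix S where
  M := Matrix.of M
  isSymm := Matrix.IsSymm.ext fun i j => hM.2.1 j i
  diagonal i := hM.1 i
  off_diagonal i j h := by
    obtain ⟨k, hk⟩ := hM.2.2 i j h
    show M i j ≠ 1
    omega

theorem ecox_rel_eq_one (s t : S) (h : M s t ≠ 0) :
    (ecoxGen M s * ecoxGen M t) ^ (M s t) = 1 := by
  have hmem : ((FreeGroup.of s * FreeGroup.of t) ^ (M s t)) ∈ ecoxRels M := ⟨s, t, h, rfl⟩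
  have h1 : (QuotientGroup.mk ((FreeGroup.of s * FreeGroup.of t) ^ (M s t)) :
      PresentedGroup (ecoxRels M)) = 1 :=
    (QuotientGroup.eq_one_iff _).mpr (Subgroup.subset_normalClosure hmem)
  have h2 : (ecoxGen M s * ecoxGen M t) ^ (M s t)
      = PresentedGroup.mk (ecoxRels M) ((FreeGroup.of s * FreeGroup.of t) ^ (M s t)) := by
    rw [map_pow, map_mul]; rfl
  rw [h2]; exact h1

/-- The homomorphism to the Coxeter group of `ecoxCM`. -/
def ecoxToCox : PresentedGroup (ecoxRels M) →* (ecoxCM M hM).Group :=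
  PresentedGroup.toGroup (f := fun s => PresentedGroup.of s) (by
    rintro r ⟨s, t, h0, rfl⟩
    rw [map_pow, map_mul, FreeGroup.lift_apply_of, FreeGroup.lift_apply_of]
    have := (ecoxCM M hM).toCoxeterSystem.simple_mul_simple_pow s t
    rwa [CoxeterMatrix.toCoxeterSystem_simple] at this)

/-- The homomorphism back. -/
def coxToEcox : (ecoxCM M hM).Group →* PresentedGroup (ecoxRels M) :=
  PresentedGroup.toGroup (f := fun s => ecoxGen M s) (by
    rintro r ⟨⟨s, t⟩, rfl⟩
    rw [Function.uncurry, CoxeterMatrix.relation, map_pow, map_mul, FreeGroup.lift_apply_of,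
      FreeGroup.lift_apply_of]
    by_cases h : M s t = 0
    · rw [show (ecoxCM M hM) s t = 0 from h, pow_zero]
    · exact ecox_rel_eq_one M s t h)

/-- The group isomorphism. -/
def ecoxEquiv : PresentedGroup (ecoxRels M) ≃* (ecoxCM M hM).Group where
  toFun := ecoxToCox M hM
  invFun := coxToEcox M hM
  left_inv x := by
    have h : (coxToEcox M hM).comp (ecoxToCox M hM) = MonoidHom.id _ := by
      apply PresentedGroup.ext
      intro a
      show coxToEcox M hM (ecoxToCox M hM (PresentedGroup.of a)) = PresentedGroup.of a
      have e1 : ecoxToCox M hM (PresentedGroup.of a) = PresentedGroup.of a :=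
        PresentedGroup.toGroup.of _
      rw [e1]
      exact PresentedGroup.toGroup.of _
    exact DFunLike.congr_fun h x
  right_inv x := by
    have h : (ecoxToCox M hM).comp (coxToEcox M hM) = MonoidHom.id _ := by
      apply PresentedGroup.ext
      intro a
      show ecoxToCox M hM (coxToEcox M hM (PresentedGroup.of a)) = PresentedGroup.of a
      have e1 : coxToEcox M hM (PresentedGroup.of a) = PresentedGroup.of a :=
        PresentedGroup.toGroup.of _
      rw [e1]
      exact PresentedGroup.toGroup.of _
    exact DFunLike.congr_fun h x
  map_mul' := map_mul _

/-- The Coxeter system structure on the even Coxeter group. -/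
def ecoxCS : CoxeterSystem (ecoxCM M hM) (PresentedGroup (ecoxRels M)) := ⟨ecoxEquiv M hM⟩

theorem ecoxCS_simple (s : S) : (ecoxCS M hM).simple s = ecoxGen M s := by
  show (ecoxEquiv M hM).symm (PresentedGroup.of s) = _
  show coxToEcox M hM (PresentedGroup.of s) = _
  exact PresentedGroup.toGroup.of _

theorem ecoxCS_wordProd (w : List S) : (ecoxCS M hM).wordProd w = ecoxPi M w := by
  induction w with
  | nil => rw [CoxeterSystem.wordProd_nil]; rfl
  | cons a w ih => rw [CoxeterSystem.wordProd_cons, ecoxPi_cons, ecoxCS_simple, ih]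

theorem geodesic_iff_reduced (w : List S) :
    ecoxIsGeodesic M w ↔ (ecoxCS M hM).IsReduced w := by
  set cs := ecoxCS M hM
  constructor
  · intro hgeo
    obtain ⟨ω', hlen, hw⟩ := cs.exists_reduced_word (cs.wordProd w)
    have h1 : w.length ≤ ω'.length := by
      apply hgeo
      rw [← ecoxCS_wordProd M hM, ← ecoxCS_wordProd M hM, ← hw]
    have h2 := cs.length_wordProd_le w
    unfold CoxeterSystem.IsReduced
    rw [hw] at h2 ⊢; unfold CoxeterSystem.IsReduced at hlen
    omega
  · intro hred w' hw'
    have h1 : cs.length (cs.wordProd w') ≤ w'.length := cs.length_wordProd_le w'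
    have h2 : cs.wordProd w' = cs.wordProd w := by
      rw [ecoxCS_wordProd M hM, ecoxCS_wordProd M hM]; exact hw'
    rw [h2, hred] at h1
    exact h1

/-- The sign homomorphism recording the parity of each generator. -/
noncomputable def ecoxSign : PresentedGroup (ecoxRels M) →* Multiplicative (S →₀ ZMod 2) :=
  PresentedGroup.toGroup
    (f := fun s => Multiplicative.ofAdd (Finsupp.single s (1 : ZMod 2))) (by
    have hself : ∀ v : S →₀ ZMod 2, v + v = 0 := by
      intro v
      ext a
      have : ∀ x : ZMod 2, x + x = 0 := by decide
      simp [this]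
    rintro r ⟨s, t, h0, rfl⟩
    rw [map_pow, map_mul, FreeGroup.lift_apply_of, FreeGroup.lift_apply_of]
    have hsq : (Multiplicative.ofAdd (Finsupp.single s (1 : ZMod 2)) *
        Multiplicative.ofAdd (Finsupp.single t (1 : ZMod 2))) ^ 2 = 1 := by
      rw [← ofAdd_add, pow_two, ← ofAdd_add, hself]
      rfl
    by_cases hst : s = t
    · subst hst
      rw [hM.1 s, pow_one, ← ofAdd_add, hself]
      rfl
    · obtain ⟨k, hk⟩ := hM.2.2 s t hst
      rw [hk, show k + k = 2 * k by omega, pow_mul, hsq, one_pow])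

theorem ecoxSign_gen (s : S) :
    ecoxSign M hM (ecoxGen M s) = Multiplicative.ofAdd (Finsupp.single s (1 : ZMod 2)) :=
  PresentedGroup.toGroup.of _

include hM in
theorem gen_eq_of_conj (s t : S) (v : PresentedGroup (ecoxRels M))
    (h : ecoxGen M t = v * ecoxGen M s * v⁻¹) : t = s := by
  have h1 := congrArg (ecoxSign M hM) h
  rw [map_mul, map_mul, map_inv, ecoxSign_gen, ecoxSign_gen] at h1
  rw [mul_comm (ecoxSign M hM v) _, mul_assoc, mul_inv_cancel, mul_one] at h1
  have h2 : Finsupp.single t (1 : ZMod 2) = Finsupp.single s (1 : ZMod 2) :=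
    Multiplicative.ofAdd.injective h1
  rcases (Finsupp.single_eq_single_iff _ _ _ _).mp h2 with ⟨h3, -⟩ | ⟨h3, -⟩
  · exact h3
  · exact absurd h3 one_ne_zero

end EcoxAux2


/-- In an even Coxeter system, a word `x` is geodesic if and only if it
contains no contiguous subword `(s, w, s)` where `(w, s)` is geodesic and
`π(w)` centralizes `s`. -/
theorem ecox_geodesic_iff_no_forbidden_subword {S : Type*} (M : S → S → ℕ)
    (hM : IsEvenCoxeterMatrix M) (x : List S) :
    ecoxIsGeodesic M x ↔
      ¬ ∃ (s : S) (w : List S), (s :: (w ++ [s])) <:+: x ∧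
        ecoxIsGeodesic M (w ++ [s]) ∧
        ecoxPi M w * ecoxGen M s = ecoxGen M s * ecoxPi M w := by
  classical
  set cs := EcoxAux2.ecoxCS M hM with hcs
  constructor
  · rintro hx ⟨s, w, ⟨a, b, hab⟩, -, hcomm⟩
    have hgen2 : ecoxGen M s * ecoxGen M s = 1 := by
      have := cs.simple_mul_simple_self s
      rwa [EcoxAux2.ecoxCS_simple M hM] at this
    have key : ecoxPi M (s :: (w ++ [s])) = ecoxPi M w := by
      rw [EcoxAux2.ecoxPi_cons, EcoxAux2.ecoxPi_append, EcoxAux2.ecoxPi_singleton, hcomm,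
        ← mul_assoc, hgen2, one_mul]
    have hpi : ecoxPi M (a ++ w ++ b) = ecoxPi M x := by
      rw [← hab]
      simp only [EcoxAux2.ecoxPi_append]
      rw [key]
    have hlen := hx _ hpi
    rw [← hab] at hlen
    simp only [List.length_append, List.length_cons] at hlen
    omega
  · intro hno
    rw [EcoxAux2.geodesic_iff_reduced M hM]
    by_contra hnred
    apply hno
    have hex : ∃ p, ¬ cs.IsReduced (x.take p) := ⟨x.length, by rwa [List.take_length]⟩
    set p := Nat.find hex with hp
    have hpspec : ¬ cs.IsReduced (x.take p) := Nat.find_spec hex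
    have hp0 : p ≠ 0 := by
      intro h0
      apply hpspec
      rw [h0, List.take_zero]
      unfold CoxeterSystem.IsReduced
      rw [CoxeterSystem.wordProd_nil]
      simp
    have hple : p ≤ x.length := Nat.find_min' hex (by rwa [List.take_length])
    have hqlt' : p - 1 < p := by omega
    have hred : cs.IsReduced (x.take (p - 1)) := not_not.mp (Nat.find_min hex hqlt')
    set q := p - 1 with hq
    have hqlt : q < x.length := by omega
    set ω := x.take q with hω0
    set i := x[q]'hqlt with hi
    have htake : x.take p = ω ++ [i] := by
      rw [show p = q + 1 by omega, List.take_succ, hω0]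
      congr 1
      rw [List.getElem?_eq_getElem hqlt]
      rfl
    have hnred2 : ¬ cs.IsReduced (ω ++ [i]) := by rwa [htake] at hpspec
    obtain ⟨j, hj, hex2⟩ := EcoxAux.exchange cs hred i hnred2
    have hdrop : ω.drop j = ω[j]'hj :: ω.drop (j + 1) := List.drop_eq_getElem_cons hj
    have hω : ω = ω.take j ++ (ω[j]'hj :: ω.drop (j + 1)) := by
      rw [← hdrop, List.take_append_drop]
    have h1 : cs.wordProd (ω.take j ++ (ω[j]'hj :: ω.drop (j + 1))) * cs.simple i
        = cs.wordProd (ω.take j) * cs.wordProd (ω.drop (j + 1)) := by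
      rw [← hω, hex2, List.eraseIdx_eq_take_drop_succ, cs.wordProd_append]
    rw [cs.wordProd_append, cs.wordProd_cons] at h1
    have h2 : cs.simple (ω[j]'hj) * (cs.wordProd (ω.drop (j + 1)) * cs.simple i)
        = cs.wordProd (ω.drop (j + 1)) := by
      apply mul_left_cancel (a := cs.wordProd (ω.take j))
      calc cs.wordProd (ω.take j)
            * (cs.simple (ω[j]'hj) * (cs.wordProd (ω.drop (j + 1)) * cs.simple i))
          = cs.wordProd (ω.take j) * (cs.simple (ω[j]'hj) * cs.wordProd (ω.drop (j + 1)))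
            * cs.simple i := by group
        _ = cs.wordProd (ω.take j) * cs.wordProd (ω.drop (j + 1)) := h1
    have hst : cs.simple (ω[j]'hj)
        = cs.wordProd (ω.drop (j + 1)) * cs.simple i * (cs.wordProd (ω.drop (j + 1)))⁻¹ := by
      have h3 : cs.simple (ω[j]'hj)
          = cs.wordProd (ω.drop (j + 1)) * (cs.wordProd (ω.drop (j + 1)) * cs.simple i)⁻¹ :=
        eq_mul_inv_of_mul_eq h2
      rw [h3, mul_inv_rev, cs.inv_simple, ← mul_assoc]
    have hti : (ω[j]'hj) = i := by
      apply EcoxAux2.gen_eq_of_conj M hM i _ (cs.wordProd (ω.drop (j + 1)))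
      rw [← EcoxAux2.ecoxCS_simple M hM, ← EcoxAux2.ecoxCS_simple M hM]
      exact hst
    have hcomm' : cs.wordProd (ω.drop (j + 1)) * cs.simple i
        = cs.simple i * cs.wordProd (ω.drop (j + 1)) := by
      rw [hti] at hst
      have h4 := congrArg (fun y => y * cs.wordProd (ω.drop (j + 1))) hst
      rw [mul_assoc (cs.wordProd (ω.drop (j + 1)) * cs.simple i), inv_mul_cancel,
        mul_one] at h4
      exact h4.symm
    refine ⟨i, ω.drop (j + 1), ?_, ?_, ?_⟩
    · refine ⟨ω.take j, x.drop p, ?_⟩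
      have hstep : ω.take j ++ (i :: (ω.drop (j + 1) ++ [i])) = ω ++ [i] := by
        conv_rhs => rw [hω]
        rw [hti]
        simp
      rw [hstep, ← htake, List.take_append_drop]
    · rw [EcoxAux2.geodesic_iff_reduced M hM]
      have hdropred : cs.IsReduced (ω[j]'hj :: ω.drop (j + 1)) := by
        rw [← hdrop]
        exact hred.drop j
      rw [hti] at hdropred
      unfold CoxeterSystem.IsReduced at hdropred ⊢
      rw [cs.wordProd_append, cs.wordProd_singleton, hcomm', ← cs.wordProd_cons]
      rw [hdropred]
      simp
    · rw [← EcoxAux2.ecoxCS_wordProd M hM, ← EcoxAux2.ecoxCS_simple M hM]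
      exact hcomm'
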